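/- Let X ∈ ℝ^{m×n} be a real matrix with rank(X) = r, and let d be any integer with d ≥ r. Then the minimum over all U ∈ ℝ^{m×d}, V ∈ ℝ^{n×d} with X = UVᵀ of ‖U‖_* ‖V‖_* exists and equals the square of the Schatten-1/2 quasi-norm sum, i.e., min_{X=UVᵀ} ‖U‖_* ‖V‖_* = (Σ_i σ_i(X)^{1/2})². -/

import Mathlib

/-!
For `X = U * W`, let `X = W_X |X|` and `W = W_W |W|` be polar decompositions and `q_j` an
orthonormal eigenbasis of `|W|`, with eigenvalues the singular values `s_j` of `W`.
Concavity of `√` (the squared entries of an orthogonal matrix form a doubly stochastic matrix)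
gives `Σ_i σ_i(X)^{1/2} ≤ Σ_j ⟪q_j, |X| q_j⟫^{1/2}`, and
`⟪q_j, |X| q_j⟫ = ⟪W_X q_j, U W_W q_j⟫ s_j`. By Cauchy–Schwarz the right-hand side is at most
`(Σ_j |⟪W_X q_j, U W_W q_j⟫|)^{1/2} (Σ_j s_j)^{1/2}`, and the first sum is at most `‖U‖_*`
because `W_X` and `W_W` are contractions. This gives `(Σ_i σ_i(X)^{1/2})² ≤ ‖U‖_* ‖W‖_*`.

Conversely, if `Xᵀ X = Q diag(λ) Qᵀ`, the factors `X Q diag(λ^{-1/4})` and `Q diag(λ^{1/4})` of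
`X` both have Gram matrix `diag(λ^{1/2})`, hence nuclear norm `Σ_i σ_i(X)^{1/2}`. Only
`rank X ≤ d` of their columns are nonzero, so they can be moved into `d` columns.
-/

open Matrix

/-- The singular values of a real matrix `X`, i.e. the nonnegative square roots of the
eigenvalues of `Xᵀ * X` (zero-padded to `n` values; zero singular values contribute `0`
to all the sums below, so this is harmless). -/
noncomputable def singularValues {m n : ℕ} (X : Matrix (Fin m) (Fin n) ℝ) : Fin n → ℝ :=
  fun i => Real.sqrt ((Matrix.isHermitian_conjTranspose_mul_self X).eigenvalues i)

/-- The nuclear norm `‖X‖_* = Σ_i σ_i(X)`. -/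
noncomputable def nuclearNorm {m n : ℕ} (X : Matrix (Fin m) (Fin n) ℝ) : ℝ :=
  ∑ i, singularValues X i

/-- The Frobenius norm `‖X‖_F = (Σ_{i,j} X_{ij}²)^{1/2}`. -/
noncomputable def frobNorm {m n : ℕ} (X : Matrix (Fin m) (Fin n) ℝ) : ℝ :=
  Real.sqrt (∑ i, ∑ j, (X i j) ^ 2)

open scoped Matrix.Norms.L2Operator

lemma Real.sum_sqrt_mul_le {ι : Type*} (s : Finset ι) (a b : ι → ℝ) (hb : ∀ i, 0 ≤ b i) :
    ∑ i ∈ s, √(a i * b i) ≤ √(∑ i ∈ s, |a i|) * √(∑ i ∈ s, b i) :=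
  calc ∑ i ∈ s, √(a i * b i) ≤ ∑ i ∈ s, √|a i| * √(b i) := Finset.sum_le_sum fun i _ => by
        rw [← Real.sqrt_mul (abs_nonneg _)]
        exact Real.sqrt_le_sqrt (mul_le_mul_of_nonneg_right (le_abs_self _) (hb i))
    _ ≤ √(∑ i ∈ s, |a i|) * √(∑ i ∈ s, b i) :=
        Real.sum_sqrt_mul_sqrt_le _ (fun _ => abs_nonneg _) hb

lemma Polynomial.sum_map_roots_X_pow_mul {p : Polynomial ℝ} (hp : p ≠ 0) {f : ℝ → ℝ}
    (hf : f 0 = 0) (k : ℕ) : ((X ^ k * p).roots.map f).sum = (p.roots.map f).sum := by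
  rw [roots_mul (mul_ne_zero (pow_ne_zero _ X_ne_zero) hp), roots_X_pow]
  simp [Multiset.map_nsmul, Multiset.sum_nsmul, hf]

namespace Matrix

section RCLike

variable {𝕜 n : Type*} [RCLike 𝕜] [Fintype n] [DecidableEq n]

lemma norm_diagonal_le_one {v : n → 𝕜} (hv : ∀ i, ‖v i‖ ≤ 1) : ‖diagonal v‖ ≤ 1 := by
  rw [l2_opNorm_diagonal]
  exact (pi_norm_le_iff_of_nonneg zero_le_one).mpr hv

lemma norm_le_one_of_mem_unitaryGroup {Q : Matrix n n 𝕜} (hQ : Q ∈ unitaryGroup n 𝕜) :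
    ‖Q‖ ≤ 1 := by
  rw [← mul_one Q, ← diagonal_one, CStarRing.norm_mem_unitary_mul _ hQ]
  exact norm_diagonal_le_one fun _ => by simp

namespace IsHermitian

variable {A : Matrix n n 𝕜} (hA : A.IsHermitian)

lemma cfc_id : hA.cfc id = A :=
  hA.spectral_theorem.symm

lemma cfc_mul_cfc (f g : ℝ → ℝ) : hA.cfc f * hA.cfc g = hA.cfc (fun t => f t * g t) := by
  simp only [IsHermitian.cfc, ← map_mul, diagonal_mul_diagonal]
  congr 2
  ext i
  simp

lemma cfc_mul_self (f : ℝ → ℝ) : hA.cfc f * A = hA.cfc (fun t => f t * t) :=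
  calc hA.cfc f * A = hA.cfc f * hA.cfc id := by rw [hA.cfc_id]
    _ = _ := hA.cfc_mul_cfc f id

lemma cfc_congr {f g : ℝ → ℝ} (h : ∀ i, f (hA.eigenvalues i) = g (hA.eigenvalues i)) :
    hA.cfc f = hA.cfc g := by
  simp only [IsHermitian.cfc, Function.comp_def, h]

lemma cfc_zero : hA.cfc 0 = 0 := by
  simp [IsHermitian.cfc]

lemma cfc_sub_one (f : ℝ → ℝ) : hA.cfc (fun t => f t - 1) = hA.cfc f - 1 := by
  rw [IsHermitian.cfc, IsHermitian.cfc, ← map_one (Unitary.conjStarAlgAut 𝕜 (Matrix n n 𝕜) _),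
    ← map_sub, ← diagonal_one, diagonal_sub]
  congr 2
  ext i
  simp

lemma conjTranspose_cfc (f : ℝ → ℝ) : (hA.cfc f)ᴴ = hA.cfc f := by
  rw [← star_eq_conjTranspose, IsHermitian.cfc, ← map_star, star_eq_conjTranspose,
    diagonal_conjTranspose]
  congr 2
  ext i
  simp

lemma norm_cfc_le_one {f : ℝ → ℝ} (hf : ∀ i, |f (hA.eigenvalues i)| ≤ 1) : ‖hA.cfc f‖ ≤ 1 := by
  rw [IsHermitian.cfc, Unitary.conjStarAlgAut_apply,
    CStarRing.norm_mul_mem_unitary _ (Unitary.star_mem hA.eigenvectorUnitary.2),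
    CStarRing.norm_coe_unitary_mul]
  exact norm_diagonal_le_one fun i => by simpa using hf i

end IsHermitian

end RCLike

namespace IsHermitian

variable {n : Type*} [Fintype n] [DecidableEq n] {A : Matrix n n ℝ} (hA : A.IsHermitian)

lemma cfc_eq_mul_diagonal (f : ℝ → ℝ) :
    hA.cfc f = (hA.eigenvectorUnitary : Matrix n n ℝ) * diagonal (f ∘ hA.eigenvalues) *
      (hA.eigenvectorUnitary : Matrix n n ℝ)ᴴ := by
  simp [IsHermitian.cfc, Unitary.conjStarAlgAut_apply, RCLike.ofReal_real_eq_id,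
    star_eq_conjTranspose]

lemma cfc_mul_eigenvectorUnitary (f : ℝ → ℝ) :
    hA.cfc f * hA.eigenvectorUnitary =
      (hA.eigenvectorUnitary : Matrix n n ℝ) * diagonal (f ∘ hA.eigenvalues) := by
  rw [cfc_eq_mul_diagonal, Matrix.mul_assoc, ← star_eq_conjTranspose,
    mem_unitaryGroup_iff'.mp (Subtype.prop _), Matrix.mul_one]

lemma star_eigenvectorUnitary_mul_mul_eigenvectorUnitary :
    star (hA.eigenvectorUnitary : Matrix n n ℝ) * A * hA.eigenvectorUnitary =
      diagonal hA.eigenvalues := by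
  simpa [Unitary.conjStarAlgAut_apply, RCLike.ofReal_real_eq_id] using
    hA.conjStarAlgAut_star_eigenvectorUnitary

lemma sum_comp_eigenvalues (f : ℝ → ℝ) :
    ∑ i, f (hA.eigenvalues i) = (A.charpoly.roots.map f).sum := by
  simp [hA.roots_charpoly_eq_eigenvalues, Multiset.map_map, RCLike.ofReal_real_eq_id]

end IsHermitian

section Polar

variable {m n : Type*} [Fintype m] [Fintype n] [DecidableEq n] (Y : Matrix m n ℝ)

lemma conjTranspose_mul_cfc_mul_mul_cfc (f g : ℝ → ℝ) :
    (Y * (isHermitian_conjTranspose_mul_self Y).cfc f)ᴴ *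
        (Y * (isHermitian_conjTranspose_mul_self Y).cfc g) =
      (isHermitian_conjTranspose_mul_self Y).cfc (fun t => f t * t * g t) := by
  rw [conjTranspose_mul, IsHermitian.conjTranspose_cfc, Matrix.mul_assoc, ← Matrix.mul_assoc Yᴴ,
    ← Matrix.mul_assoc, IsHermitian.cfc_mul_self, IsHermitian.cfc_mul_cfc]

lemma mul_cfc_conjTranspose_mul_self_eq_self {f : ℝ → ℝ}
    (hf : ∀ i, (isHermitian_conjTranspose_mul_self Y).eigenvalues i ≠ 0 →
      f ((isHermitian_conjTranspose_mul_self Y).eigenvalues i) = 1) :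
    Y * (isHermitian_conjTranspose_mul_self Y).cfc f = Y := by
  have hker : Y * (isHermitian_conjTranspose_mul_self Y).cfc (fun t => f t - 1) = 0 := by
    rw [← conjTranspose_mul_self_eq_zero, conjTranspose_mul_cfc_mul_mul_cfc, ← IsHermitian.cfc_zero]
    refine IsHermitian.cfc_congr _ fun i => ?_
    by_cases h : (isHermitian_conjTranspose_mul_self Y).eigenvalues i = 0
    · rw [h]; simp
    · rw [hf i h]; simp
  rwa [IsHermitian.cfc_sub_one, Matrix.mul_sub, Matrix.mul_one, sub_eq_zero] at hker

/-- The partial isometry `W` of the polar decomposition `Y = W |Y|`; the junk value `0⁻¹ = 0`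
makes it vanish on the kernel of `Y`. -/
noncomputable def polarFactor : Matrix m n ℝ :=
  Y * (isHermitian_conjTranspose_mul_self Y).cfc (fun t => (√t)⁻¹)

lemma conjTranspose_polarFactor_mul_self :
    (polarFactor Y)ᴴ * Y = (isHermitian_conjTranspose_mul_self Y).cfc Real.sqrt := by
  rw [polarFactor, conjTranspose_mul, IsHermitian.conjTranspose_cfc, Matrix.mul_assoc,
    IsHermitian.cfc_mul_self]
  exact IsHermitian.cfc_congr _ fun i => by rw [inv_mul_eq_div, Real.div_sqrt]

lemma polarFactor_mul_cfc_sqrt :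
    polarFactor Y * (isHermitian_conjTranspose_mul_self Y).cfc Real.sqrt = Y := by
  rw [polarFactor, Matrix.mul_assoc, IsHermitian.cfc_mul_cfc]
  refine mul_cfc_conjTranspose_mul_self_eq_self Y fun i hi => ?_
  have := (eigenvalues_conjTranspose_mul_self_nonneg Y i).lt_of_ne' hi
  exact inv_mul_cancel₀ (Real.sqrt_pos.mpr this).ne'

lemma mul_eigenvectorUnitary_eq_polarFactor_mul :
    Y * ((isHermitian_conjTranspose_mul_self Y).eigenvectorUnitary : Matrix n n ℝ) =
      polarFactor Y * ((isHermitian_conjTranspose_mul_self Y).eigenvectorUnitary : Matrix n n ℝ) *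
        diagonal fun j => √((isHermitian_conjTranspose_mul_self Y).eigenvalues j) := by
  calc _ = polarFactor Y * (isHermitian_conjTranspose_mul_self Y).cfc Real.sqrt *
        ((isHermitian_conjTranspose_mul_self Y).eigenvectorUnitary : Matrix n n ℝ) := by
        rw [polarFactor_mul_cfc_sqrt]
    _ = _ := by
        rw [Matrix.mul_assoc, IsHermitian.cfc_mul_eigenvectorUnitary, ← Matrix.mul_assoc]
        rfl

lemma norm_polarFactor_le_one : ‖polarFactor Y‖ ≤ 1 := by
  have h01 (t : ℝ) : |(√t)⁻¹ * t * (√t)⁻¹| ≤ 1 := by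
    rw [inv_mul_eq_div, Real.div_sqrt]
    rcases eq_or_ne (√t) 0 with h | h <;> simp [h]
  have hsq : ‖polarFactor Y‖ * ‖polarFactor Y‖ ≤ 1 := by
    rw [← l2_opNorm_conjTranspose_mul_self, polarFactor, conjTranspose_mul_cfc_mul_mul_cfc]
    exact IsHermitian.norm_cfc_le_one _ fun i => h01 _
  nlinarith [norm_nonneg (polarFactor Y)]

end Polar

lemma sum_le_sum_diag_conj_of_concaveOn {n : Type*} [Fintype n] [DecidableEq n]
    {f : ℝ → ℝ} (hf : ConcaveOn ℝ (Set.Ici 0) f) {M : Matrix n n ℝ}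
    (hM : M ∈ unitaryGroup n ℝ) {c : n → ℝ} (hc : ∀ i, 0 ≤ c i) :
    ∑ i, f (c i) ≤ ∑ j, f ((star M * diagonal c * M) j j) := by
  have hcol (j : n) : ∑ i, M i j ^ 2 = 1 := by
    simpa [mul_apply, sq] using congr_fun₂ (mem_unitaryGroup_iff'.mp hM) j j
  have hrow (i : n) : ∑ j, M i j ^ 2 = 1 := by
    simpa [mul_apply, sq] using congr_fun₂ (mem_unitaryGroup_iff.mp hM) i i
  have hdiag (j : n) : (star M * diagonal c * M) j j = ∑ i, M i j ^ 2 • c i := by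
    rw [mul_apply]
    simp only [mul_diagonal, star_apply, star_trivial, smul_eq_mul]
    exact Finset.sum_congr rfl fun i _ => by ring
  calc ∑ i, f (c i) = ∑ j, ∑ i, M i j ^ 2 • f (c i) := by
        rw [Finset.sum_comm]
        simp only [smul_eq_mul, ← Finset.sum_mul, hrow, one_mul]
    _ ≤ ∑ j, f (∑ i, M i j ^ 2 • c i) := Finset.sum_le_sum fun j _ =>
        hf.le_map_sum (fun i _ => sq_nonneg _) (hcol j) fun i _ => hc i
    _ = ∑ j, f ((star M * diagonal c * M) j j) := by simp only [hdiag]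

lemma sum_sq_apply_eq_conjTranspose_mul_self {ι κ : Type*} [Fintype ι] (M : Matrix ι κ ℝ)
    (k : κ) : ∑ i, M i k ^ 2 = (Mᴴ * M) k k := by
  simp [mul_apply, sq]

lemma apply_eq_zero_of_conjTranspose_mul_self_eq_diagonal {ι κ : Type*} [Fintype ι]
    [DecidableEq κ] {M : Matrix ι κ ℝ} {c : κ → ℝ} (h : Mᴴ * M = diagonal c) {k : κ}
    (hk : c k = 0) (i : ι) : M i k = 0 := by
  have hsum : ∑ i, M i k ^ 2 = 0 := by
    rw [sum_sq_apply_eq_conjTranspose_mul_self, h, diagonal_apply_eq, hk]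
  exact pow_eq_zero_iff two_ne_zero |>.mp <|
    (Finset.sum_eq_zero_iff_of_nonneg fun _ _ => sq_nonneg _).mp hsum i (Finset.mem_univ _)

lemma sum_sq_mul_apply_le_of_norm_le_one {ι κ p : Type*} [Fintype ι] [DecidableEq ι] [Fintype κ]
    {A : Matrix κ ι ℝ} (hA : ‖A‖ ≤ 1) (B : Matrix ι p ℝ) (k : p) :
    ∑ i, (A * B) i k ^ 2 ≤ ∑ j, B j k ^ 2 := by
  have h := (l2_opNorm_mulVec A (WithLp.toLp 2 fun j => B j k)).trans
    (mul_le_of_le_one_left (norm_nonneg _) hA)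
  have h2 := pow_le_pow_left₀ (norm_nonneg _) h 2
  simp only [EuclideanSpace.norm_sq_eq] at h2
  simpa [mul_apply, mulVec, dotProduct] using h2

lemma sum_abs_diag_mul_conjTranspose_le {ι κ : Type*} [Fintype ι] [Fintype κ]
    (A B : Matrix ι κ ℝ) :
    ∑ j, |(A * Bᴴ) j j| ≤ ∑ k, √(∑ j, A j k ^ 2) * √(∑ j, B j k ^ 2) := by
  calc ∑ j, |(A * Bᴴ) j j| ≤ ∑ j, ∑ k, |A j k| * |B j k| := Finset.sum_le_sum fun j _ => by
        simpa [mul_apply, abs_mul] using Finset.abs_sum_le_sum_abs (fun k => A j k * B j k) _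
    _ = ∑ k, ∑ j, |A j k| * |B j k| := Finset.sum_comm
    _ ≤ ∑ k, √(∑ j, |A j k| ^ 2) * √(∑ j, |B j k| ^ 2) := Finset.sum_le_sum fun k _ =>
        Real.sum_mul_le_sqrt_mul_sqrt _ _ _
    _ = ∑ k, √(∑ j, A j k ^ 2) * √(∑ j, B j k ^ 2) := by simp only [sq_abs]

lemma submatrix_val_mul_conjTranspose_submatrix_val {a b ι : Type*} [Fintype ι]
    {p : ι → Prop} [DecidablePred p] (A : Matrix a ι ℝ) (B : Matrix b ι ℝ)
    (hA : ∀ x i, ¬p i → A x i = 0) :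
    A.submatrix id (Subtype.val : Subtype p → ι) * (B.submatrix id (Subtype.val : Subtype p → ι))ᴴ =
      A * Bᴴ := by
  ext x y
  simp only [mul_apply, submatrix_apply, id, conjTranspose_apply]
  have hout : ∑ i : {i // ¬p i}, A x i * star (B y i) = 0 :=
    Finset.sum_eq_zero fun i _ => by rw [hA x i i.2, zero_mul]
  rw [← Fintype.sum_subtype_add_sum_subtype p, hout, add_zero]

lemma submatrix_val_mul_embedding_mul_conjTranspose {a b ι κ : Type*} [Fintype ι]
    [DecidableEq ι] [Fintype κ] [DecidableEq κ] {p : ι → Prop} [DecidablePred p]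
    (e : Subtype p ↪ κ) (A : Matrix a ι ℝ) (B : Matrix b ι ℝ) (hA : ∀ x i, ¬p i → A x i = 0) :
    A.submatrix id (Subtype.val : Subtype p → ι) * (1 : Matrix κ κ ℝ).submatrix e id *
        (B.submatrix id (Subtype.val : Subtype p → ι) * (1 : Matrix κ κ ℝ).submatrix e id)ᴴ =
      A * Bᴴ := by
  have hE : (1 : Matrix κ κ ℝ).submatrix e id * ((1 : Matrix κ κ ℝ).submatrix e id)ᴴ = 1 := by
    rw [conjTranspose_submatrix, conjTranspose_one,
      ← submatrix_mul _ _ _ _ _ Function.bijective_id, Matrix.one_mul, submatrix_one _ e.injective]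
  rw [conjTranspose_mul, Matrix.mul_assoc, ← Matrix.mul_assoc (submatrix 1 e id), hE,
    Matrix.one_mul, submatrix_val_mul_conjTranspose_submatrix_val _ _ hA]

theorem exists_mul_conjTranspose_eq_of_card_le {a b ι κ : Type*} [Fintype ι] [DecidableEq ι]
    [Fintype κ] [DecidableEq κ] (p : ι → Prop) [DecidablePred p]
    (hcard : Fintype.card {i // p i} ≤ Fintype.card κ) {Z : Matrix a ι ℝ} {W : Matrix b ι ℝ}
    (hZ : ∀ x i, ¬p i → Z x i = 0) (hW : ∀ y i, ¬p i → W y i = 0) :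
    ∃ (U : Matrix a κ ℝ) (V : Matrix b κ ℝ),
      U * Vᴴ = Z * Wᴴ ∧ U * Uᴴ = Z * Zᴴ ∧ V * Vᴴ = W * Wᴴ := by
  obtain ⟨e⟩ := Function.Embedding.nonempty_of_card_le hcard
  exact ⟨_, _, submatrix_val_mul_embedding_mul_conjTranspose e Z W hZ,
    submatrix_val_mul_embedding_mul_conjTranspose e Z Z hZ,
    submatrix_val_mul_embedding_mul_conjTranspose e W W hW⟩

end Matrix

section NuclearNorm

variable {m n : ℕ}

lemma nuclearNorm_nonneg (Y : Matrix (Fin m) (Fin n) ℝ) : 0 ≤ nuclearNorm Y :=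
  Finset.sum_nonneg fun _ _ => Real.sqrt_nonneg _

lemma nuclearNorm_eq_sum_sqrt_roots (Y : Matrix (Fin m) (Fin n) ℝ) :
    nuclearNorm Y = ((Yᴴ * Y).charpoly.roots.map Real.sqrt).sum :=
  (isHermitian_conjTranspose_mul_self Y).sum_comp_eigenvalues _

lemma nuclearNorm_eq_sum_sqrt_roots_mul_conjTranspose (Y : Matrix (Fin m) (Fin n) ℝ) :
    nuclearNorm Y = ((Y * Yᴴ).charpoly.roots.map Real.sqrt).sum := by
  rw [nuclearNorm_eq_sum_sqrt_roots, ← Polynomial.sum_map_roots_X_pow_mul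
      (charpoly_monic _).ne_zero Real.sqrt_zero (Fintype.card (Fin m)),
    charpoly_mul_comm', Polynomial.sum_map_roots_X_pow_mul (charpoly_monic _).ne_zero
      Real.sqrt_zero]

lemma nuclearNorm_transpose (Y : Matrix (Fin m) (Fin n) ℝ) : nuclearNorm Yᵀ = nuclearNorm Y := by
  rw [nuclearNorm_eq_sum_sqrt_roots_mul_conjTranspose, nuclearNorm_eq_sum_sqrt_roots,
    conjTranspose_eq_transpose_of_trivial, conjTranspose_eq_transpose_of_trivial,
    transpose_transpose]

lemma nuclearNorm_eq_of_mul_conjTranspose_eq {k : ℕ} {U : Matrix (Fin m) (Fin n) ℝ}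
    {Z : Matrix (Fin m) (Fin k) ℝ} (h : U * Uᴴ = Z * Zᴴ) : nuclearNorm U = nuclearNorm Z := by
  rw [nuclearNorm_eq_sum_sqrt_roots_mul_conjTranspose, h,
    ← nuclearNorm_eq_sum_sqrt_roots_mul_conjTranspose]

lemma nuclearNorm_eq_of_conjTranspose_mul_self_eq_diagonal {Z : Matrix (Fin m) (Fin n) ℝ}
    {c : Fin n → ℝ} (h : Zᴴ * Z = diagonal c) : nuclearNorm Z = ∑ i, √(c i) := by
  rw [nuclearNorm_eq_sum_sqrt_roots, h, charpoly_diagonal,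
    Polynomial.roots_prod _ _ (by simp [Finset.prod_ne_zero_iff, Polynomial.X_sub_C_ne_zero])]
  simp [Finset.sum_eq_multiset_sum, Function.comp_def]

lemma card_singularValues_ne_zero (X : Matrix (Fin m) (Fin n) ℝ) :
    Fintype.card {i // singularValues X i ≠ 0} = X.rank := by
  rw [← rank_conjTranspose_mul_self,
    (isHermitian_conjTranspose_mul_self X).rank_eq_card_non_zero_eigs]
  refine Fintype.card_congr (Equiv.subtypeEquivRight fun i => ?_)
  rw [singularValues, Real.sqrt_ne_zero']
  exact (eigenvalues_conjTranspose_mul_self_nonneg X i).lt_iff_ne'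

end NuclearNorm

theorem sum_abs_diag_le_nuclearNorm {m d : ℕ} {ι : Type*} [Fintype ι] [DecidableEq ι]
    (U : Matrix (Fin m) (Fin d) ℝ) {R : Matrix (Fin m) ι ℝ} {P : Matrix (Fin d) ι ℝ}
    (hR : ‖R‖ ≤ 1) (hP : ‖P‖ ≤ 1) : ∑ j, |(Rᴴ * U * P) j j| ≤ nuclearNorm U := by
  let Q : Matrix (Fin d) (Fin d) ℝ := (isHermitian_conjTranspose_mul_self U).eigenvectorUnitary
  have hQ : Q ∈ unitaryGroup (Fin d) ℝ := Subtype.prop _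
  have hfactor : Rᴴ * U * P = Rᴴ * (U * Q) * (Pᴴ * Q)ᴴ := by
    rw [conjTranspose_mul, conjTranspose_conjTranspose, ← star_eq_conjTranspose]
    simp only [Matrix.mul_assoc]
    rw [← Matrix.mul_assoc Q, mem_unitaryGroup_iff.mp hQ, Matrix.one_mul]
  have hcolU (k : Fin d) : ∑ j, (Rᴴ * (U * Q)) j k ^ 2 ≤
      (isHermitian_conjTranspose_mul_self U).eigenvalues k := by
    refine (sum_sq_mul_apply_le_of_norm_le_one (by rwa [l2_opNorm_conjTranspose]) _ k).trans_eq ?_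
    rw [sum_sq_apply_eq_conjTranspose_mul_self, conjTranspose_mul, ← star_eq_conjTranspose,
      Matrix.mul_assoc, ← Matrix.mul_assoc Uᴴ, ← Matrix.mul_assoc,
      IsHermitian.star_eigenvectorUnitary_mul_mul_eigenvectorUnitary, diagonal_apply_eq]
  have hcolP (k : Fin d) : ∑ j, (Pᴴ * Q) j k ^ 2 ≤ 1 := by
    refine (sum_sq_mul_apply_le_of_norm_le_one (by rwa [l2_opNorm_conjTranspose]) _ k).trans_eq ?_
    rw [sum_sq_apply_eq_conjTranspose_mul_self, ← star_eq_conjTranspose,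
      mem_unitaryGroup_iff'.mp hQ, one_apply_eq]
  calc ∑ j, |(Rᴴ * U * P) j j|
      ≤ ∑ k, √(∑ j, (Rᴴ * (U * Q)) j k ^ 2) * √(∑ j, (Pᴴ * Q) j k ^ 2) := by
        rw [hfactor]; exact sum_abs_diag_mul_conjTranspose_le _ _
    _ ≤ ∑ k, √((isHermitian_conjTranspose_mul_self U).eigenvalues k) * 1 := by
        gcongr with k
        · exact hcolU k
        · exact Real.sqrt_le_one.mpr (hcolP k)
    _ = nuclearNorm U := by simp [nuclearNorm, singularValues]

theorem sum_sqrt_singularValues_le_sum_sqrt_diag {m n : ℕ} (X : Matrix (Fin m) (Fin n) ℝ)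
    {Q : Matrix (Fin n) (Fin n) ℝ} (hQ : Q ∈ unitaryGroup (Fin n) ℝ) :
    ∑ i, √(singularValues X i) ≤
      ∑ j, √((star Q * (isHermitian_conjTranspose_mul_self X).cfc Real.sqrt * Q) j j) := by
  let QX : Matrix (Fin n) (Fin n) ℝ := (isHermitian_conjTranspose_mul_self X).eigenvectorUnitary
  have hM : star (star QX * Q) * diagonal (singularValues X) * (star QX * Q) =
      star Q * (isHermitian_conjTranspose_mul_self X).cfc Real.sqrt * Q := by
    rw [IsHermitian.cfc_eq_mul_diagonal, star_mul, star_star]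
    simp only [Matrix.mul_assoc, star_eq_conjTranspose]
    rfl
  rw [← hM]
  exact sum_le_sum_diag_conj_of_concaveOn Real.strictConcaveOn_sqrt.concaveOn
    (mul_mem (Unitary.star_mem (Subtype.prop _)) hQ) fun i => Real.sqrt_nonneg _

theorem sq_sum_sqrt_singularValues_mul_le {m d n : ℕ} (U : Matrix (Fin m) (Fin d) ℝ)
    (W : Matrix (Fin d) (Fin n) ℝ) :
    (∑ i, √(singularValues (U * W) i)) ^ 2 ≤ nuclearNorm U * nuclearNorm W := by
  generalize hX : U * W = X
  let Q : Matrix (Fin n) (Fin n) ℝ := (isHermitian_conjTranspose_mul_self W).eigenvectorUnitary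
  have hQ : Q ∈ unitaryGroup (Fin n) ℝ := Subtype.prop _
  let R := polarFactor X * Q
  let P := polarFactor W * Q
  have hR : ‖R‖ ≤ 1 := (l2_opNorm_mul _ _).trans <| mul_le_one₀ (norm_polarFactor_le_one X)
    (norm_nonneg _) (norm_le_one_of_mem_unitaryGroup hQ)
  have hP : ‖P‖ ≤ 1 := (l2_opNorm_mul _ _).trans <| mul_le_one₀ (norm_polarFactor_le_one W)
    (norm_nonneg _) (norm_le_one_of_mem_unitaryGroup hQ)
  have hconj : star Q * (isHermitian_conjTranspose_mul_self X).cfc Real.sqrt * Q =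
      Rᴴ * U * P * diagonal (singularValues W) := by
    have hWQ : W * Q = P * diagonal (singularValues W) :=
      mul_eigenvectorUnitary_eq_polarFactor_mul W
    rw [Matrix.mul_assoc _ P, ← hWQ, ← conjTranspose_polarFactor_mul_self]
    simp only [R, conjTranspose_mul, star_eq_conjTranspose, Matrix.mul_assoc, ← hX]
  have hsum : ∑ i, √(singularValues X i) ≤ √(nuclearNorm U) * √(nuclearNorm W) :=
    calc ∑ i, √(singularValues X i)
        ≤ ∑ j, √((star Q * (isHermitian_conjTranspose_mul_self X).cfc Real.sqrt * Q) j j) :=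
          sum_sqrt_singularValues_le_sum_sqrt_diag X hQ
      _ = ∑ j, √((Rᴴ * U * P) j j * singularValues W j) := by simp only [hconj, mul_diagonal]
      _ ≤ √(∑ j, |(Rᴴ * U * P) j j|) * √(nuclearNorm W) :=
          Real.sum_sqrt_mul_le _ _ _ fun _ => Real.sqrt_nonneg _
      _ ≤ √(nuclearNorm U) * √(nuclearNorm W) := by
          gcongr
          exact sum_abs_diag_le_nuclearNorm U hR hP
  calc (∑ i, √(singularValues X i)) ^ 2 ≤ (√(nuclearNorm U) * √(nuclearNorm W)) ^ 2 :=
        pow_le_pow_left₀ (Finset.sum_nonneg fun _ _ => Real.sqrt_nonneg _) hsum 2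
    _ = nuclearNorm U * nuclearNorm W := by
        rw [mul_pow, Real.sq_sqrt (nuclearNorm_nonneg U), Real.sq_sqrt (nuclearNorm_nonneg W)]

theorem exists_balanced_factorization {m n : ℕ} (X : Matrix (Fin m) (Fin n) ℝ) :
    ∃ (Z : Matrix (Fin m) (Fin n) ℝ) (W : Matrix (Fin n) (Fin n) ℝ), X = Z * Wᴴ ∧
      Zᴴ * Z = diagonal (singularValues X) ∧ Wᴴ * W = diagonal (singularValues X) := by
  let Q : Matrix (Fin n) (Fin n) ℝ := (isHermitian_conjTranspose_mul_self X).eigenvectorUnitary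
  have hQ : Q ∈ unitaryGroup (Fin n) ℝ := Subtype.prop _
  let r : Fin n → ℝ := fun i => √(singularValues X i)
  refine ⟨X * Q * diagonal fun i => (r i)⁻¹, Q * diagonal r, ?_, ?_, ?_⟩
  · have hX := mul_cfc_conjTranspose_mul_self_eq_self X (f := fun t => (√√t)⁻¹ * √√t)
      fun i hi => by
        have := (eigenvalues_conjTranspose_mul_self_nonneg X i).lt_of_ne' hi
        exact inv_mul_cancel₀ (by positivity)
    rw [IsHermitian.cfc_eq_mul_diagonal] at hX
    conv_lhs => rw [← hX]
    simp only [conjTranspose_mul, diagonal_conjTranspose, Matrix.mul_assoc]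
    rw [← Matrix.mul_assoc (diagonal _), diagonal_mul_diagonal]
    congr 4
  · have hquartic (t : ℝ) : (√√t)⁻¹ * (t * (√√t)⁻¹) = √t :=
      calc (√√t)⁻¹ * (t * (√√t)⁻¹) = t / √√t ^ 2 := by ring
        _ = √t := by rw [Real.sq_sqrt (Real.sqrt_nonneg t), Real.div_sqrt]
    simp only [conjTranspose_mul, diagonal_conjTranspose, Matrix.mul_assoc]
    rw [← Matrix.mul_assoc Xᴴ X, ← Matrix.mul_assoc Qᴴ, ← Matrix.mul_assoc (Qᴴ * _),
      ← star_eq_conjTranspose, IsHermitian.star_eigenvectorUnitary_mul_mul_eigenvectorUnitary,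
      diagonal_mul_diagonal, diagonal_mul_diagonal]
    congr 1
    ext i
    exact hquartic _
  · simp only [conjTranspose_mul, diagonal_conjTranspose, Matrix.mul_assoc]
    rw [← Matrix.mul_assoc Qᴴ, ← star_eq_conjTranspose, mem_unitaryGroup_iff'.mp hQ,
      Matrix.one_mul, diagonal_mul_diagonal]
    congr 1
    ext i
    exact Real.mul_self_sqrt (Real.sqrt_nonneg _)

theorem exists_factorization_nuclearNorm_eq {m n d : ℕ} (X : Matrix (Fin m) (Fin n) ℝ)
    (hX : X.rank ≤ d) :
    ∃ (U : Matrix (Fin m) (Fin d) ℝ) (V : Matrix (Fin n) (Fin d) ℝ), X = U * Vᵀ ∧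
      nuclearNorm U = ∑ i, √(singularValues X i) ∧ nuclearNorm V = ∑ i, √(singularValues X i) := by
  obtain ⟨Z, W, hZW, hZ, hW⟩ := exists_balanced_factorization X
  obtain ⟨U, V, hUV, hU, hV⟩ := exists_mul_conjTranspose_eq_of_card_le (κ := Fin d)
    (fun i => singularValues X i ≠ 0) (by rwa [card_singularValues_ne_zero, Fintype.card_fin])
    (fun x i hi => apply_eq_zero_of_conjTranspose_mul_self_eq_diagonal hZ (not_not.mp hi) x)
    (fun y i hi => apply_eq_zero_of_conjTranspose_mul_self_eq_diagonal hW (not_not.mp hi) y)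
  refine ⟨U, V, ?_, ?_, ?_⟩
  · rw [← conjTranspose_eq_transpose_of_trivial, hUV, hZW]
  · rw [nuclearNorm_eq_of_mul_conjTranspose_eq hU,
      nuclearNorm_eq_of_conjTranspose_mul_self_eq_diagonal hZ]
  · rw [nuclearNorm_eq_of_mul_conjTranspose_eq hV,
      nuclearNorm_eq_of_conjTranspose_mul_self_eq_diagonal hW]

/-- For `X` of rank `r ≤ d`, the minimum of `‖U‖_* ‖V‖_*` over factorizations
`X = U Vᵀ` exists and equals `(Σ_i σ_i(X)^(1/2))²`. -/
theorem biNuclear_eq_schatten_half {m n r d : ℕ} (X : Matrix (Fin m) (Fin n) ℝ)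
    (hrank : X.rank = r) (hd : r ≤ d) :
    IsLeast {t : ℝ | ∃ (U : Matrix (Fin m) (Fin d) ℝ) (V : Matrix (Fin n) (Fin d) ℝ),
        X = U * Vᵀ ∧ t = nuclearNorm U * nuclearNorm V}
      ((∑ i, singularValues X i ^ ((1 : ℝ) / 2)) ^ 2) := by
  simp only [← Real.sqrt_eq_rpow]
  obtain ⟨U, V, hUV, hU, hV⟩ := exists_factorization_nuclearNorm_eq X (hrank ▸ hd)
  refine ⟨⟨U, V, hUV, by rw [hU, hV, sq]⟩, ?_⟩
  rintro t ⟨U, V, rfl, rfl⟩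
  simpa only [nuclearNorm_transpose] using sq_sum_sqrt_singularValues_mul_le U Vᵀ
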